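/- Along the scaled analytic ray μ_α(x) = α z_T(x), the witness output is the exponential interpolation S_k(μ_α(x)) = T_{x,k}^α T̄_k^{1−α} / Σ_j T_{x,j}^α T̄_j^{1−α}. In particular, at α = 0 the witness outputs T̄ and at α = 1 it outputs T_x. -/

import Mathlib

open Finset

def dot {n : ℕ} (u v : Fin n → ℝ) : ℝ := ∑ i, u i * v i

open Real

/-!
The Gram matrix of a regular simplex is `(K/(K-1)) I - (1/(K-1)) 𝟙𝟙ᵀ`, so on coefficient vectors
summing to zero it acts as `K/(K-1)` times the identity. The centered log-odds sum to zero, hence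
the witness logits at `z_T(x)` are `β v_k · z_T(x) = r_k(x)`, and along the ray `α z_T(x)` they are
`α r_k(x) + log T̄_k`. Up to the `k`-independent centering term, which cancels in the softmax, this
is `log (T_{x,k}^α T̄_k^{1-α})`.
-/

theorem dot_smul_right {n : ℕ} (u w : Fin n → ℝ) (a : ℝ) : dot u (a • w) = a * dot u w := by
  simp only [dot, Pi.smul_apply, smul_eq_mul, mul_sum]
  exact sum_congr rfl fun i _ => mul_left_comm _ _ _

theorem dot_sum_smul_right {ι : Type*} [Fintype ι] {n : ℕ} (u : Fin n → ℝ) (c : ι → ℝ)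
    (w : ι → Fin n → ℝ) : dot u (∑ j, c j • w j) = ∑ j, c j * dot u (w j) := by
  simp only [dot, Finset.sum_apply, Pi.smul_apply, smul_eq_mul, mul_sum]
  rw [sum_comm]
  exact sum_congr rfl fun j _ => sum_congr rfl fun i _ => by ring

theorem sum_mul_dot_of_gram {ι : Type*} [Fintype ι] {n : ℕ} {v : ι → Fin n → ℝ} {a b : ℝ}
    (hnorm : ∀ i, dot (v i) (v i) = a) (hcross : ∀ i j, i ≠ j → dot (v i) (v j) = b)
    (c : ι → ℝ) (k : ι) :
    ∑ j, c j * dot (v k) (v j) = (a - b) * c k + b * ∑ j, c j := by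
  classical
  have gram : ∀ j, dot (v k) (v j) = b + if k = j then a - b else 0 := fun j => by
    by_cases hkj : k = j
    · subst hkj
      simp [hnorm]
    · simp [hcross k j hkj, hkj]
  simp only [gram, mul_add, sum_add_distrib, mul_ite, mul_zero, sum_ite_eq, mem_univ, if_true,
    ← sum_mul]
  ring

theorem sum_sub_mean_eq_zero {K : ℕ} (hK : K ≠ 0) (f : Fin K → ℝ) :
    ∑ k, (f k - 1 / (K : ℝ) * ∑ j, f j) = 0 := by
  rw [sum_sub_distrib, sum_const, card_univ, Fintype.card_fin, nsmul_eq_mul]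
  field_simp
  ring

theorem mul_dot_simplex_code {K n : ℕ} (hK : 1 < K) {β : ℝ} (hβ : β ≠ 0)
    {v : Fin K → Fin n → ℝ} (hvnorm : ∀ i, dot (v i) (v i) = 1)
    (hvcross : ∀ i j, i ≠ j → dot (v i) (v j) = -1 / ((K : ℝ) - 1))
    {r : Fin K → ℝ} (hr : ∑ j, r j = 0) (k : Fin K) :
    β * dot (v k) ((((K : ℝ) - 1) / ((K : ℝ) * β)) • ∑ j, r j • v j) = r k := by
  have hK1 : (1 : ℝ) < K := by exact_mod_cast hK
  rw [dot_smul_right, dot_sum_smul_right, sum_mul_dot_of_gram hvnorm hvcross, hr]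
  field_simp [sub_ne_zero.mpr hK1.ne']
  ring

theorem exp_mul_log_div_sub_add_log {t s : ℝ} (ht : 0 < t) (hs : 0 < s) (α c : ℝ) :
    exp (α * (log (t / s) - c) + log s) = exp (-(α * c)) * (t ^ α * s ^ (1 - α)) := by
  rw [rpow_def_of_pos ht, rpow_def_of_pos hs, ← exp_add, ← exp_add, log_div ht.ne' hs.ne']
  ring_nf

theorem scaled_ray_exponential_interpolation_general {K dz : ℕ} {X : Type*}
    (hK : 2 ≤ K)
    (β : ℝ) (hβ : 0 < β)
    (v : Fin K → Fin dz → ℝ)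
    (hvnorm : ∀ i, dot (v i) (v i) = 1)
    (hvcross : ∀ i j, i ≠ j → dot (v i) (v j) = -1 / ((K : ℝ) - 1))
    (T : X → Fin K → ℝ) (hT0 : ∀ x k, 0 < T x k) (hT1 : ∀ x, ∑ k, T x k = 1)
    (Tbar : Fin K → ℝ) (hTbar0 : ∀ k, 0 < Tbar k) (hTbar1 : ∑ k, Tbar k = 1)
    (r : X → Fin K → ℝ)
    (hr : ∀ x k, r x k =
      Real.log (T x k / Tbar k) - (1 / (K : ℝ)) * ∑ j, Real.log (T x j / Tbar j))
    (zT : X → Fin dz → ℝ)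
    (hzT : ∀ x, zT x = (((K : ℝ) - 1) / ((K : ℝ) * β)) • ∑ k, r x k • v k)
    (S : (Fin dz → ℝ) → Fin K → ℝ)
    (hS : ∀ z k, S z k =
      Real.exp (β * dot (v k) z + Real.log (Tbar k)) /
        ∑ j, Real.exp (β * dot (v j) z + Real.log (Tbar j))) :
    (∀ (α : ℝ) (x : X) (k : Fin K),
        S (α • zT x) k =
          T x k ^ α * Tbar k ^ (1 - α) / ∑ j, T x j ^ α * Tbar j ^ (1 - α))
      ∧ (∀ x k, S ((0 : ℝ) • zT x) k = Tbar k)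
      ∧ (∀ x k, S ((1 : ℝ) • zT x) k = T x k) := by
  have logit : ∀ x k, β * dot (v k) (zT x) = r x k := fun x k => by
    rw [hzT]
    refine mul_dot_simplex_code hK hβ.ne' hvnorm hvcross ?_ k
    simp only [hr]
    exact sum_sub_mean_eq_zero (by omega) _
  have interpolation : ∀ (α : ℝ) (x : X) (k : Fin K),
      S (α • zT x) k = T x k ^ α * Tbar k ^ (1 - α) / ∑ j, T x j ^ α * Tbar j ^ (1 - α) := by
    intro α x k
    have weight : ∀ j, exp (β * dot (v j) (α • zT x) + log (Tbar j)) =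
        exp (-(α * (1 / (K : ℝ) * ∑ i, log (T x i / Tbar i)))) * (T x j ^ α * Tbar j ^ (1 - α)) :=
      fun j => by
        rw [dot_smul_right, mul_left_comm, logit, hr]
        exact exp_mul_log_div_sub_add_log (hT0 x j) (hTbar0 j) α _
    rw [hS]
    simp only [weight, ← mul_sum, mul_div_mul_left _ _ (exp_ne_zero _)]
  refine ⟨interpolation, fun x k => ?_, fun x k => ?_⟩
  · rw [interpolation 0 x k]
    simp [hTbar1]
  · rw [interpolation 1 x k]
    simp [hT1 x]

/-- Scaled analytic ray: along `μ_α(x) = α z_T(x)` the witness output is the exponential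
interpolation `S_k(μ_α(x)) = T_{x,k}^α T̄_k^{1−α} / ∑_j T_{x,j}^α T̄_j^{1−α}`; in particular
at `α = 0` the witness outputs `T̄` and at `α = 1` it outputs `T_x`. -/
theorem scaled_ray_exponential_interpolation {K dz : ℕ} {X : Type*}
    (hK : 2 ≤ K)
    (β : ℝ) (hβ : 0 < β)
    (v : Fin K → Fin dz → ℝ)
    (hvsum : ∑ k, v k = 0)
    (hvnorm : ∀ i, dot (v i) (v i) = 1)
    (hvcross : ∀ i j, i ≠ j → dot (v i) (v j) = -1 / ((K : ℝ) - 1))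
    (T : X → Fin K → ℝ) (hT0 : ∀ x k, 0 < T x k) (hT1 : ∀ x, ∑ k, T x k = 1)
    (Tbar : Fin K → ℝ) (hTbar0 : ∀ k, 0 < Tbar k) (hTbar1 : ∑ k, Tbar k = 1)
    (r : X → Fin K → ℝ)
    (hr : ∀ x k, r x k =
      Real.log (T x k / Tbar k) - (1 / (K : ℝ)) * ∑ j, Real.log (T x j / Tbar j))
    (zT : X → Fin dz → ℝ)
    (hzT : ∀ x, zT x = (((K : ℝ) - 1) / ((K : ℝ) * β)) • ∑ k, r x k • v k)
    (S : (Fin dz → ℝ) → Fin K → ℝ)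
    (hS : ∀ z k, S z k =
      Real.exp (β * dot (v k) z + Real.log (Tbar k)) /
        ∑ j, Real.exp (β * dot (v j) z + Real.log (Tbar j))) :
    (∀ (α : ℝ) (x : X) (k : Fin K),
        S (α • zT x) k =
          T x k ^ α * Tbar k ^ (1 - α) / ∑ j, T x j ^ α * Tbar j ^ (1 - α))
      ∧ (∀ x k, S ((0 : ℝ) • zT x) k = Tbar k)
      ∧ (∀ x k, S ((1 : ℝ) • zT x) k = T x k) :=
  scaled_ray_exponential_interpolation_general hK β hβ v hvnorm hvcross T hT0 hT1 Tbar hTbar0 hTbar1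
    r hr zT hzT S hS
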